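/- For each integer j ≥ 1 and each ε with 0 < ε < 1/2 there is a constant K = K(j, ε) such that |ω_j(ξ) − 1| ≤ K ξ^{1/2 − ε} for all 0 < ξ ≤ 1. In particular ω_j(ξ) → 1 as ξ → 0+. -/

import Mathlib

/-!
Move the line of integration from `Re s = 1` to `Re s = -(1/2 - ε)`. The integrand
`Γ(s/2 + 1/4)^j ξ^{-s} / s` is holomorphic on `Re s > -1/2` apart from the simple pole at `s = 0`,
whose residue `1` accounts for the main term. The bounds `‖Γ z‖ ≤ Γ(Re z)` and
`‖Γ z‖ |Im z| ≤ Γ(Re z + 1)` make the horizontal segments of the contour vanish in the limit and,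
since `j ≥ 1`, make the integral over the new line converge absolutely. On that line
`|ξ^{-s}| = ξ^{1/2 - ε}`, which gives the bound.
-/

open scoped BigOperators

noncomputable section

/-- `ω_j(ξ) = (1/2πi) ∫_{(c)} (Γ(s/2+1/4)/Γ(1/4))^j ξ^{-s} ds/s`, with `ω_j(0) = 1`;
the contour is taken at `c = 1` (the value is independent of `c > 0`). -/
def omegaFun (j : ℕ) (ξ : ℝ) : ℂ :=
  if ξ = 0 then 1 else
    (1 / (2 * Real.pi)) * ∫ t : ℝ,
      (Complex.Gamma ((1 + t * Complex.I) / 2 + 1 / 4) / Complex.Gamma (1 / 4)) ^ j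
        * (ξ : ℂ) ^ (-(1 + t * Complex.I)) / (1 + t * Complex.I)

open MeasureTheory Complex Set Filter Topology intervalIntegral

namespace Complex

theorem norm_Gamma_le_Gamma_re {z : ℂ} (hz : 0 < z.re) : ‖Gamma z‖ ≤ Real.Gamma z.re := by
  rw [Gamma_eq_integral hz, GammaIntegral, Real.Gamma_eq_integral hz]
  refine norm_integral_le_of_norm_le (Real.GammaIntegral_convergent hz) ?_
  filter_upwards [ae_restrict_mem measurableSet_Ioi] with x hx
  rw [norm_mul, norm_cpow_eq_rpow_re_of_pos hx, norm_real, Real.norm_eq_abs,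
    abs_of_pos (Real.exp_pos _)]
  simp

theorem norm_Gamma_mul_abs_im_le {z : ℂ} (hz : 0 < z.re) :
    ‖Gamma z‖ * |z.im| ≤ Real.Gamma (z.re + 1) :=
  calc ‖Gamma z‖ * |z.im| ≤ ‖Gamma z‖ * ‖z‖ := by gcongr; exact abs_im_le_norm z
    _ = ‖Gamma (z + 1)‖ := by
      rw [Gamma_add_one z (fun h => hz.ne' (by simp [h])), norm_mul, mul_comm]
    _ ≤ Real.Gamma (z.re + 1) := by
      simpa using norm_Gamma_le_Gamma_re (z := z + 1) (by simp; linarith)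

end Complex

theorem integral_inv_ofReal_add_mul_I {c : ℝ} (hc : c ≠ 0) (T : ℝ) :
    ∫ t in -T..T, ((c : ℂ) + t * I)⁻¹ = 2 * Real.arctan (T / c) := by
  have hne : ∀ t : ℝ, (c : ℂ) + t * I ≠ 0 := fun t h => hc (by simpa using congrArg re h)
  have hne' : ∀ t : ℝ, (c : ℂ) - t * I ≠ 0 := fun t h => hc (by simpa using congrArg re h)
  -- `t ↦ -t` swaps the integrals over `c + tI` and `c - tI`, and the sum of the integrands is real
  have hsymm : ∫ t in -T..T, ((c : ℂ) - t * I)⁻¹ = ∫ t in -T..T, ((c : ℂ) + t * I)⁻¹ := by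
    simpa [sub_eq_add_neg] using
      integral_comp_neg (a := -T) (b := T) (fun t : ℝ => ((c : ℂ) + t * I)⁻¹)
  have hsum (t : ℝ) : ((c : ℂ) + t * I)⁻¹ + ((c : ℂ) - t * I)⁻¹
      = ((2 * (c⁻¹ * (1 + (t / c) ^ 2)⁻¹) : ℝ) : ℂ) := by
    have hprod : ((c : ℂ) + t * I) * ((c : ℂ) - t * I) = ((c ^ 2 + t ^ 2 : ℝ) : ℂ) := by
      push_cast; ring_nf; rw [I_sq]; ring
    have hreal : 2 * c / (c ^ 2 + t ^ 2) = 2 * (c⁻¹ * (1 + (t / c) ^ 2)⁻¹) := by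
      field_simp
    rw [inv_add_inv (hne t) (hne' t), hprod, ← hreal,
      show (c : ℂ) + t * I + (c - t * I) = ((2 * c : ℝ) : ℂ) by push_cast; ring, ← ofReal_div]
  have hreal : ∫ t in -T..T, c⁻¹ * (1 + (t / c) ^ 2)⁻¹ = 2 * Real.arctan (T / c) := by
    rw [intervalIntegral.integral_const_mul,
      intervalIntegral.integral_comp_div (fun x => (1 + x ^ 2)⁻¹) hc, integral_inv_one_add_sq,
      neg_div, Real.arctan_neg, smul_eq_mul]
    field_simp
    ring
  have hsum_int : 2 * ∫ t in -T..T, ((c : ℂ) + t * I)⁻¹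
      = ∫ t in -T..T, ((c : ℂ) + t * I)⁻¹ + ((c : ℂ) - t * I)⁻¹ := by
    have hcont : Continuous fun t : ℝ => ((c : ℂ) + t * I)⁻¹ := by fun_prop (disch := exact hne _)
    have hcont' : Continuous fun t : ℝ => ((c : ℂ) - t * I)⁻¹ := by fun_prop (disch := exact hne' _)
    rw [integral_add (hcont.intervalIntegrable _ _) (hcont'.intervalIntegrable _ _), hsymm, two_mul]
  simp_rw [hsum] at hsum_int
  rw [intervalIntegral.integral_ofReal, intervalIntegral.integral_const_mul, hreal] at hsum_int
  simp only [ofReal_mul, ofReal_ofNat] at hsum_int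
  linear_combination hsum_int / 2

theorem tendsto_intervalIntegral_inv_vertical_sub {c₁ c₂ : ℝ} (h₁ : c₁ < 0) (h₂ : 0 < c₂) :
    Tendsto (fun T : ℝ => (∫ t in -T..T, ((c₂ : ℂ) + t * I)⁻¹) - ∫ t in -T..T, ((c₁ : ℂ) + t * I)⁻¹)
      atTop (𝓝 (2 * Real.pi)) := by
  simp_rw [integral_inv_ofReal_add_mul_I h₁.ne, integral_inv_ofReal_add_mul_I h₂.ne']
  have hreal : Tendsto (fun T : ℝ => 2 * Real.arctan (T / c₂) - 2 * Real.arctan (T / c₁))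
      atTop (𝓝 (2 * (Real.pi / 2) - 2 * (-(Real.pi / 2)))) :=
    ((Real.tendsto_arctan_atTop.mono_right nhdsWithin_le_nhds).comp
        (tendsto_id.atTop_div_const h₂)).const_mul 2 |>.sub
      (((Real.tendsto_arctan_atBot.mono_right nhdsWithin_le_nhds).comp
        (tendsto_id.atTop_div_const_of_neg h₁)).const_mul 2)
  rw [show 2 * (Real.pi / 2) - 2 * (-(Real.pi / 2)) = 2 * Real.pi by ring] at hreal
  simpa only [Function.comp_def, ofReal_sub, ofReal_mul, ofReal_ofNat] using
    (continuous_ofReal.tendsto _).comp hreal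

section ContourShift

variable {E : Type*} [NormedAddCommGroup E] [NormedSpace ℂ E]

theorem norm_intervalIntegral_horizontal_le {g : ℂ → E} {c₁ c₂ B y : ℝ} (hc : c₁ ≤ c₂)
    (hy : y ≠ 0) (hB : ∀ s : ℂ, s.re ∈ Icc c₁ c₂ → ‖g s‖ * |s.im| ≤ B) :
    ‖∫ x in c₁..c₂, g (x + y * I)‖ ≤ B / |y| * (c₂ - c₁) := by
  have hbound : ∀ x ∈ uIoc c₁ c₂, ‖g (x + y * I)‖ ≤ B / |y| := by
    intro x hx
    rw [uIoc_of_le hc] at hx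
    rw [le_div_iff₀ (abs_pos.2 hy)]
    simpa using hB (x + y * I) (by simpa using Ioc_subset_Icc_self hx)
  simpa [abs_of_nonneg (sub_nonneg.2 hc)] using norm_integral_le_of_norm_le_const hbound

theorem tendsto_intervalIntegral_vertical_sub {g : ℂ → E} {c₁ c₂ B : ℝ} (hc : c₁ ≤ c₂)
    (hg : DifferentiableOn ℂ g (re ⁻¹' Icc c₁ c₂))
    (hB : ∀ s : ℂ, s.re ∈ Icc c₁ c₂ → ‖g s‖ * |s.im| ≤ B) :
    Tendsto (fun T : ℝ => (∫ t in -T..T, g (c₂ + t * I)) - ∫ t in -T..T, g (c₁ + t * I))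
      atTop (𝓝 0) := by
  have hrect : ∀ T > 0, ‖(∫ t in -T..T, g (c₂ + t * I)) - ∫ t in -T..T, g (c₁ + t * I)‖
      ≤ 2 * (B / T * (c₂ - c₁)) := by
    intro T hT
    have hcauchy := Complex.integral_boundary_rect_eq_zero_of_differentiableOn g
      (c₁ - T * I) (c₂ + T * I) (hg.mono fun s hs => by
        simpa [uIcc_of_le hc] using (mem_reProdIm.1 hs).1)
    simp only [sub_re, add_re, ofReal_re, mul_re, I_re, I_im, ofReal_im, sub_im, add_im,
      mul_im, mul_zero, sub_zero, mul_one, zero_sub, zero_add, add_zero] at hcauchy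
    have hvert : (∫ t in -T..T, g (c₂ + t * I)) - ∫ t in -T..T, g (c₁ + t * I)
        = I • ((∫ x in c₁..c₂, g (x + ((-T : ℝ) : ℂ) * I)) - ∫ x in c₁..c₂, g (x + T * I)) := by
      have h := congrArg (I • ·) hcauchy
      simp only [smul_add, smul_sub, smul_smul, I_mul_I, neg_one_smul, smul_zero] at h
      rw [smul_sub, ← sub_eq_zero, ← neg_eq_zero, ← h]
      abel
    calc _ = ‖(∫ x in c₁..c₂, g (x + ((-T : ℝ) : ℂ) * I)) - ∫ x in c₁..c₂, g (x + T * I)‖ := by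
          rw [hvert, norm_smul, norm_I, one_mul]
      _ ≤ B / |-T| * (c₂ - c₁) + B / |T| * (c₂ - c₁) :=
          norm_sub_le_of_le (norm_intervalIntegral_horizontal_le hc (neg_ne_zero.2 hT.ne') hB)
            (norm_intervalIntegral_horizontal_le hc hT.ne' hB)
      _ = 2 * (B / T * (c₂ - c₁)) := by rw [abs_neg, abs_of_pos hT]; ring
  have hlim : Tendsto (fun T : ℝ => 2 * (B / T * (c₂ - c₁))) atTop (𝓝 0) := by
    simpa using ((tendsto_const_nhds (x := B)).div_atTop tendsto_id).mul_const (c₂ - c₁)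
      |>.const_mul 2
  exact squeeze_zero_norm' (eventually_gt_atTop 0 |>.mono hrect) hlim

end ContourShift

def verticalIntegral (f : ℂ → ℂ) (c : ℝ) : ℂ := ∫ t : ℝ, f (c + t * I)

section Residue

variable {F : ℂ → ℂ} {c₁ c₂ M : ℝ}

theorem norm_dslope_zero_mul_abs_im_le (hM : ∀ s : ℂ, s.re ∈ Icc c₁ c₂ → ‖F s‖ ≤ M) {s : ℂ}
    (hs : s.re ∈ Icc c₁ c₂) : ‖dslope F 0 s‖ * |s.im| ≤ M + ‖F 0‖ := by
  rcases eq_or_ne s 0 with rfl | hs0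
  · simpa using add_nonneg ((norm_nonneg _).trans (hM 0 (by simpa using hs))) (norm_nonneg _)
  · rw [dslope_of_ne F hs0, slope_def_field, sub_zero, norm_div]
    calc ‖F s - F 0‖ / ‖s‖ * |s.im| ≤ ‖F s - F 0‖ / ‖s‖ * ‖s‖ := by
          gcongr; exact abs_im_le_norm s
      _ = ‖F s - F 0‖ := div_mul_cancel₀ _ (norm_ne_zero_iff.2 hs0)
      _ ≤ M + ‖F 0‖ := (norm_sub_le _ _).trans (by gcongr; exact hM s hs)

theorem tendsto_intervalIntegral_vertical_div_sub (h₁ : c₁ < 0) (h₂ : 0 < c₂)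
    (hF : DifferentiableOn ℂ F (re ⁻¹' Icc c₁ c₂))
    (hM : ∀ s : ℂ, s.re ∈ Icc c₁ c₂ → ‖F s‖ ≤ M) :
    Tendsto (fun T : ℝ => (∫ t in -T..T, F (c₂ + t * I) / (c₂ + t * I))
        - ∫ t in -T..T, F (c₁ + t * I) / (c₁ + t * I)) atTop (𝓝 (2 * Real.pi * F 0)) := by
  have hnhds : re ⁻¹' Icc c₁ c₂ ∈ 𝓝 (0 : ℂ) :=
    mem_of_superset ((isOpen_Ioo.preimage continuous_re).mem_nhds (by simpa using ⟨h₁, h₂⟩))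
      (preimage_mono Ioo_subset_Icc_self)
  have hΦ : DifferentiableOn ℂ (dslope F 0) (re ⁻¹' Icc c₁ c₂) :=
    (differentiableOn_dslope hnhds).2 hF
  -- `F s / s = dslope F 0 s + F 0 / s` separates the pole at `0` from a holomorphic part
  have hsplit : ∀ c ∈ Icc c₁ c₂, c ≠ 0 → ∀ T : ℝ, ∫ t in -T..T, F (c + t * I) / (c + t * I)
      = (∫ t in -T..T, dslope F 0 (c + t * I)) + F 0 * ∫ t in -T..T, ((c : ℂ) + t * I)⁻¹ := by
    intro c hc hc0 T
    have hne : ∀ t : ℝ, (c : ℂ) + t * I ≠ 0 := fun t h => hc0 (by simpa using congrArg re h)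
    have hΦc : Continuous fun t : ℝ => dslope F 0 (c + t * I) :=
      hΦ.continuousOn.comp_continuous (by fun_prop) fun t => by simpa using hc
    have hinv : Continuous fun t : ℝ => ((c : ℂ) + t * I)⁻¹ := by fun_prop (disch := exact hne _)
    rw [← intervalIntegral.integral_const_mul, ← integral_add (hΦc.intervalIntegrable _ _)
      ((hinv.const_mul _).intervalIntegrable _ _)]
    refine integral_congr fun t _ => ?_
    rw [dslope_of_ne F (hne t), slope_def_field, sub_zero]
    field_simp [hne t]
    ring
  have hlim := (tendsto_intervalIntegral_vertical_sub (h₁.trans h₂).le hΦ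
    fun s hs => norm_dslope_zero_mul_abs_im_le hM hs).add
      ((tendsto_intervalIntegral_inv_vertical_sub h₁ h₂).const_mul (F 0))
  rw [zero_add, mul_comm] at hlim
  refine hlim.congr fun T => ?_
  rw [hsplit c₂ ⟨(h₁.trans h₂).le, le_rfl⟩ h₂.ne' T, hsplit c₁ ⟨le_rfl, (h₁.trans h₂).le⟩ h₁.ne T]
  ring

theorem verticalIntegral_div_sub_eq (h₁ : c₁ < 0) (h₂ : 0 < c₂)
    (hF : DifferentiableOn ℂ F (re ⁻¹' Icc c₁ c₂))
    (hM : ∀ s : ℂ, s.re ∈ Icc c₁ c₂ → ‖F s‖ ≤ M)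
    (hi₁ : Integrable fun t : ℝ => F (c₁ + t * I) / (c₁ + t * I))
    (hi₂ : Integrable fun t : ℝ => F (c₂ + t * I) / (c₂ + t * I)) :
    verticalIntegral (fun s => F s / s) c₂ - verticalIntegral (fun s => F s / s) c₁
      = 2 * Real.pi * F 0 :=
  tendsto_nhds_unique
    ((intervalIntegral_tendsto_integral hi₂ tendsto_neg_atTop_atBot tendsto_id).sub
      (intervalIntegral_tendsto_integral hi₁ tendsto_neg_atTop_atBot tendsto_id))
    (tendsto_intervalIntegral_vertical_div_sub h₁ h₂ hF hM)

end Residue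

def gammaRatio (s : ℂ) : ℂ := Gamma (s / 2 + 1 / 4) / Gamma (1 / 4)

theorem norm_Gamma_one_div_four : ‖Gamma (1 / 4)‖ = Real.Gamma (1 / 4) := by
  rw [show (1 / 4 : ℂ) = ((1 / 4 : ℝ) : ℂ) by push_cast; ring, Gamma_ofReal, norm_real,
    Real.norm_of_nonneg (Real.Gamma_pos_of_pos (by norm_num)).le]

theorem gammaRatio_zero : gammaRatio 0 = 1 := by
  rw [gammaRatio, zero_div, zero_add, div_self]
  rw [← norm_ne_zero_iff, norm_Gamma_one_div_four]
  exact (Real.Gamma_pos_of_pos (by norm_num)).ne'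

theorem differentiableOn_gammaRatio : DifferentiableOn ℂ gammaRatio {s | -(1 / 2) < s.re} := by
  intro s hs
  refine (((differentiableAt_Gamma _ fun m h => ?_).comp s (by fun_prop)).div_const _)
    |>.differentiableWithinAt
  have := congrArg re h
  simp at this hs
  linarith [(m.cast_nonneg : (0 : ℝ) ≤ m)]

theorem norm_gammaRatio_le {s : ℂ} (hs : -(1 / 2) < s.re) :
    ‖gammaRatio s‖ ≤ Real.Gamma (s.re / 2 + 1 / 4) / Real.Gamma (1 / 4) := by
  rw [gammaRatio, norm_div, norm_Gamma_one_div_four]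
  gcongr
  simpa using norm_Gamma_le_Gamma_re (z := s / 2 + 1 / 4) (by simp; linarith)

theorem norm_gammaRatio_mul_abs_im_le {s : ℂ} (hs : -(1 / 2) < s.re) :
    ‖gammaRatio s‖ * |s.im| ≤ 2 * Real.Gamma (s.re / 2 + 1 / 4 + 1) / Real.Gamma (1 / 4) := by
  have h := norm_Gamma_mul_abs_im_le (z := s / 2 + 1 / 4) (by simp; linarith)
  simp only [add_im, add_re, div_ofNat_im, div_ofNat_re, one_re, one_im, zero_div, add_zero,
    abs_div, abs_two] at h
  rw [gammaRatio, norm_div, norm_Gamma_one_div_four, div_mul_eq_mul_div,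
    div_le_div_iff_of_pos_right (Real.Gamma_pos_of_pos (by norm_num))]
  linarith

theorem norm_gammaRatio_mul_norm_le {s : ℂ} (hs : -(1 / 2) < s.re) :
    ‖gammaRatio s‖ * ‖s‖ ≤ Real.Gamma (s.re / 2 + 1 / 4) / Real.Gamma (1 / 4) * |s.re|
      + 2 * Real.Gamma (s.re / 2 + 1 / 4 + 1) / Real.Gamma (1 / 4) := by
  nlinarith [norm_gammaRatio_le hs, norm_gammaRatio_mul_abs_im_le hs, norm_le_abs_re_add_abs_im s,
    norm_nonneg (gammaRatio s), abs_nonneg s.re]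

theorem continuous_gammaRatio_vertical {c : ℝ} (hc : -(1 / 2) < c) :
    Continuous fun t : ℝ => gammaRatio (c + t * I) :=
  differentiableOn_gammaRatio.continuousOn.comp_continuous (by fun_prop) fun t => by simpa using hc

theorem integrable_gammaRatio_pow_div {j : ℕ} (hj : 1 ≤ j) {c : ℝ} (hc : -(1 / 2) < c)
    (hc0 : c ≠ 0) : Integrable fun t : ℝ => gammaRatio (c + t * I) ^ j / (c + t * I) := by
  set A := Real.Gamma (c / 2 + 1 / 4) / Real.Gamma (1 / 4)
  set B := 2 * Real.Gamma (c / 2 + 1 / 4 + 1) / Real.Gamma (1 / 4)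
  have hne : ∀ t : ℝ, (c : ℂ) + t * I ≠ 0 := fun t h => hc0 (by simpa using congrArg re h)
  -- `gammaRatio` is bounded and decays like `1 / |t|`, so the integrand is `O(1 / (c ^ 2 + t ^ 2))`
  have hbound (t : ℝ) : ‖gammaRatio (c + t * I) ^ j / (c + t * I)‖
      ≤ A ^ (j - 1) * (A * |c| + B) * ((c ^ 2)⁻¹ * (1 + (t / c) ^ 2)⁻¹) := by
    set s : ℂ := c + t * I
    have hsre : s.re = c := by simp [s]
    have hre : -(1 / 2) < s.re := hsre ▸ hc
    have hA : ‖gammaRatio s‖ ≤ A := by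
      have h := norm_gammaRatio_le hre; rwa [hsre] at h
    have hmain : ‖gammaRatio s‖ * ‖s‖ ≤ A * |c| + B := by
      have h := norm_gammaRatio_mul_norm_le hre; rwa [hsre] at h
    have hsq : ‖s‖ ^ 2 = c ^ 2 + t ^ 2 := by rw [Complex.sq_norm, normSq_add_mul_I]
    have hscale : (c ^ 2)⁻¹ * (1 + (t / c) ^ 2)⁻¹ = (‖s‖ ^ 2)⁻¹ := by
      rw [hsq]; field_simp
    obtain ⟨k, rfl⟩ := Nat.exists_eq_add_of_le' hj
    rw [hscale, norm_div, norm_pow, Nat.add_sub_cancel, pow_succ, mul_div_assoc, mul_assoc]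
    refine mul_le_mul (pow_le_pow_left₀ (norm_nonneg _) hA k) ?_ (by positivity)
      ((pow_nonneg (norm_nonneg _) k).trans (pow_le_pow_left₀ (norm_nonneg _) hA k))
    calc ‖gammaRatio s‖ / ‖s‖ = ‖gammaRatio s‖ * ‖s‖ * (‖s‖ ^ 2)⁻¹ := by field_simp
      _ ≤ (A * |c| + B) * (‖s‖ ^ 2)⁻¹ := by gcongr
  refine Integrable.mono' ((integrable_inv_one_add_sq.comp_div hc0).const_mul _ |>.const_mul _)
    ?_ (ae_of_all _ hbound)
  exact (((continuous_gammaRatio_vertical hc).pow j).div (by fun_prop) hne).aestronglyMeasurable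

def omegaIntegrand (j : ℕ) (ξ : ℝ) (s : ℂ) : ℂ := gammaRatio s ^ j * (ξ : ℂ) ^ (-s)

section omegaIntegrand

variable (j : ℕ) {ξ : ℝ}

theorem omegaFun_eq (hξ : ξ ≠ 0) :
    omegaFun j ξ
      = (2 * (Real.pi : ℂ))⁻¹ * verticalIntegral (fun s => omegaIntegrand j ξ s / s) 1 := by
  simp [omegaFun, hξ, verticalIntegral, omegaIntegrand, gammaRatio]

theorem omegaIntegrand_zero : omegaIntegrand j ξ 0 = 1 := by
  simp [omegaIntegrand, gammaRatio_zero]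

theorem differentiableOn_omegaIntegrand (hξ : ξ ≠ 0) :
    DifferentiableOn ℂ (omegaIntegrand j ξ) {s | -(1 / 2) < s.re} :=
  (differentiableOn_gammaRatio.pow j).mul fun _ _ =>
    (differentiableAt_neg_iff.2 differentiableAt_id |>.const_cpow
      (Or.inl (ofReal_ne_zero.2 hξ))).differentiableWithinAt

theorem norm_ofReal_cpow_neg (hξ : 0 < ξ) (s : ℂ) : ‖(ξ : ℂ) ^ (-s)‖ = ξ ^ (-s.re) := by
  rw [norm_cpow_eq_rpow_re_of_pos hξ, neg_re]

theorem exists_norm_omegaIntegrand_le (hξ : 0 < ξ) {c₁ : ℝ} (hc : -(1 / 2) < c₁) (c₂ : ℝ) :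
    ∃ M, ∀ s : ℂ, s.re ∈ Icc c₁ c₂ → ‖omegaIntegrand j ξ s‖ ≤ M := by
  have hΓ : ContinuousOn (fun x : ℝ => Real.Gamma (x / 2 + 1 / 4)) (Icc c₁ c₂) := fun x hx =>
    (Real.differentiableAt_Gamma fun m => by linarith [hx.1, (m.cast_nonneg : (0 : ℝ) ≤ m)])
      |>.continuousAt.comp (f := fun x : ℝ => x / 2 + 1 / 4) (by fun_prop) |>.continuousWithinAt
  have hcont : ContinuousOn
      (fun x : ℝ => (Real.Gamma (x / 2 + 1 / 4) / Real.Gamma (1 / 4)) ^ j * ξ ^ (-x)) (Icc c₁ c₂) :=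
    ((hΓ.div_const _).pow j).mul fun x _ =>
      (Real.continuousAt_const_rpow hξ.ne').comp (by fun_prop) |>.continuousWithinAt
  obtain ⟨M, hM⟩ := isCompact_Icc.exists_bound_of_continuousOn hcont
  refine ⟨M, fun s hs => ?_⟩
  have hre : -(1 / 2) < s.re := hc.trans_le hs.1
  calc ‖omegaIntegrand j ξ s‖ = ‖gammaRatio s‖ ^ j * ξ ^ (-s.re) := by
        rw [omegaIntegrand, norm_mul, norm_pow, norm_ofReal_cpow_neg hξ]
    _ ≤ (Real.Gamma (s.re / 2 + 1 / 4) / Real.Gamma (1 / 4)) ^ j * ξ ^ (-s.re) := by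
        gcongr; exact norm_gammaRatio_le hre
    _ ≤ M := (Real.le_norm_self _).trans (hM s.re hs)

theorem integrable_omegaIntegrand_div (hj : 1 ≤ j) (hξ : 0 < ξ) {c : ℝ} (hc : -(1 / 2) < c)
    (hc0 : c ≠ 0) : Integrable fun t : ℝ => omegaIntegrand j ξ (c + t * I) / (c + t * I) := by
  have hcont : Continuous fun t : ℝ => (ξ : ℂ) ^ (-((c : ℂ) + t * I)) :=
    (by fun_prop : Continuous fun t : ℝ => -((c : ℂ) + t * I)).const_cpow
      (Or.inl (ofReal_ne_zero.2 hξ.ne'))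
  have hbdd (t : ℝ) : ‖(ξ : ℂ) ^ (-((c : ℂ) + t * I))‖ ≤ ξ ^ (-c) := by
    rw [norm_ofReal_cpow_neg hξ]
    simp
  refine ((integrable_gammaRatio_pow_div hj hc hc0).bdd_mul hcont.aestronglyMeasurable
    (ae_of_all _ hbdd)).congr (ae_of_all _ fun t => ?_)
  simp only [omegaIntegrand]
  ring

theorem norm_verticalIntegral_omegaIntegrand_div_le (hξ : 0 < ξ) (c : ℝ) :
    ‖verticalIntegral (fun s => omegaIntegrand j ξ s / s) c‖
      ≤ ξ ^ (-c) * ∫ t : ℝ, ‖gammaRatio (c + t * I) ^ j / (c + t * I)‖ := by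
  rw [verticalIntegral, ← MeasureTheory.integral_const_mul]
  refine (MeasureTheory.norm_integral_le_integral_norm _).trans (le_of_eq (integral_congr_ae
    (ae_of_all _ fun t => ?_)))
  simp only [omegaIntegrand]
  rw [mul_div_right_comm, norm_mul, norm_ofReal_cpow_neg hξ, add_re, ofReal_re, mul_re, I_re,
    I_im, ofReal_im, mul_zero, zero_mul, sub_zero, add_zero, mul_comm]

theorem exists_norm_omegaFun_sub_one_le (hj : 1 ≤ j) {a : ℝ} (ha : 0 < a) (ha' : a < 1 / 2) :
    ∃ K : ℝ, ∀ ξ : ℝ, 0 < ξ → ‖omegaFun j ξ - 1‖ ≤ K * ξ ^ a := by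
  have hc : -(1 / 2) < -a := by linarith
  refine ⟨(2 * Real.pi)⁻¹ * ∫ t : ℝ, ‖gammaRatio ((-a : ℝ) + t * I) ^ j / ((-a : ℝ) + t * I)‖,
    fun ξ hξ => ?_⟩
  obtain ⟨M, hM⟩ := exists_norm_omegaIntegrand_le j hξ hc 1
  -- shifting the contour from `Re s = 1` to `Re s = -a` crosses the pole of `1 / s` at `0`
  have hshift := verticalIntegral_div_sub_eq (neg_lt_zero.2 ha) one_pos
    ((differentiableOn_omegaIntegrand j hξ.ne').mono fun s hs => hc.trans_le hs.1) hM
    (integrable_omegaIntegrand_div j hj hξ hc (neg_ne_zero.2 ha.ne'))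
    (integrable_omegaIntegrand_div j hj hξ (by norm_num) one_ne_zero)
  rw [omegaIntegrand_zero, mul_one] at hshift
  have h2π : (2 * Real.pi : ℂ) ≠ 0 := mul_ne_zero two_ne_zero (ofReal_ne_zero.2 Real.pi_ne_zero)
  have hsub : omegaFun j ξ - 1
      = (2 * Real.pi : ℂ)⁻¹ * verticalIntegral (fun s => omegaIntegrand j ξ s / s) (-a) := by
    rw [omegaFun_eq j hξ.ne', eq_add_of_sub_eq hshift, mul_add, inv_mul_cancel₀ h2π,
      add_sub_cancel_left]
  have hnorm : ‖(2 * Real.pi : ℂ)⁻¹‖ = (2 * Real.pi)⁻¹ := by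
    rw [← ofReal_ofNat, ← ofReal_mul, ← ofReal_inv, norm_real,
      Real.norm_of_nonneg (by positivity)]
  rw [hsub, norm_mul, hnorm, mul_assoc]
  gcongr
  simpa [mul_comm] using norm_verticalIntegral_omegaIntegrand_div_le j hξ (-a)

end omegaIntegrand

/-- For small `ξ > 0` one has `ω_j(ξ) = 1 + O_{j,ε}(ξ^{1/2-ε})`; in particular
`ω_j(ξ) → 1` as `ξ → 0⁺`. -/
theorem stmt3 (j : ℕ) (hj : 1 ≤ j) (ε : ℝ) (hε : 0 < ε) (hε' : ε < 1 / 2) :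
    (∃ K : ℝ, ∀ ξ : ℝ, 0 < ξ → ξ ≤ 1 →
      ‖omegaFun j ξ - 1‖ ≤ K * ξ ^ ((1 : ℝ) / 2 - ε)) ∧
    Filter.Tendsto (fun ξ : ℝ => omegaFun j ξ) (nhdsWithin 0 (Set.Ioi 0)) (nhds 1) := by
  have ha : 0 < 1 / 2 - ε := by linarith
  obtain ⟨K, hK⟩ := exists_norm_omegaFun_sub_one_le j hj ha (by linarith)
  refine ⟨⟨K, fun ξ hξ _ => hK ξ hξ⟩, ?_⟩
  have hpow : Tendsto (fun ξ : ℝ => ξ ^ (1 / 2 - ε)) (𝓝[>] 0) (𝓝 0) := by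
    have h := (Real.continuousAt_rpow_const 0 _ (Or.inr ha.le)).tendsto
    rw [Real.zero_rpow ha.ne'] at h
    exact h.mono_left nhdsWithin_le_nhds
  refine tendsto_sub_nhds_zero_iff.1
    (squeeze_zero_norm' ?_ (by simpa only [mul_zero] using hpow.const_mul K))
  filter_upwards [self_mem_nhdsWithin] with ξ hξ using hK ξ hξ
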